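/- Let {B_k}_{k=1}^∞ be a sequence of subsets of the space S^n of n×n real symmetric matrices, and let J ⊆ S^n_+ be a closed convex cone with ⋂_{k=1}^∞ J_+(B_k) = J, where J_+(B) = {X ∈ S^n_+ : ⟨B, X⟩ ≥ 0 for all B ∈ B}. Then ⋂_{m=1}^∞ co(Γ^n ∩ (⋂_{k=1}^m J_+(B_k))) = co(Γ^n ∩ J). -/

import Mathlib

/-!
Each set `Γⁿ ∩ ⋂_{k ≤ m} J₊(Bₖ)` is closed under nonnegative scaling, so by Carathéodory a point
`X` of its convex hull is a sum of `N = n² + 1` rank-one matrices `xᵢ xᵢᵀ` from that set, with `N`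
independent of `m`. Decompositions `X = ∑ xᵢ xᵢᵀ` of a fixed `X` satisfy `‖xᵢ‖² ≤ tr X`, so they
form a compact set, and those whose terms lie in the `m`-th set form a decreasing sequence of
nonempty closed subsets of it. By Cantor's intersection theorem a single decomposition works for
every `m`; its terms lie in `Γⁿ ∩ J`.
-/

open Matrix

/-- Γ^n = {x xᵀ : x ∈ ℝ^n}. -/
def Gamma (n : ℕ) : Set (Matrix (Fin n) (Fin n) ℝ) :=
  {X | ∃ x : Fin n → ℝ, X = vecMulVec x x}

/-- The cone of n×n real PSD matrices. -/
def PSDcone (n : ℕ) : Set (Matrix (Fin n) (Fin n) ℝ) := {X | X.PosSemidef}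

/-- J_+(𝓑) = {X ∈ S^n_+ : ⟨B, X⟩ ≥ 0 for every B ∈ 𝓑}, where ⟨B,X⟩ = trace(BX). -/
def JpFam {n : ℕ} (𝓑 : Set (Matrix (Fin n) (Fin n) ℝ)) : Set (Matrix (Fin n) (Fin n) ℝ) :=
  {X | X.PosSemidef ∧ ∀ B ∈ 𝓑, 0 ≤ (B * X).trace}

open Set Function

theorem Function.Injective.sum_extend_zero {ι κ M : Type*} [Fintype ι] [Fintype κ]
    [AddCommMonoid M] {e : ι → κ} (he : Injective e) (g : ι → M) :
    ∑ k, extend e g 0 k = ∑ i, g i := by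
  classical
  rw [← Finset.sum_subset (Finset.subset_univ (Finset.univ.map ⟨e, he⟩)), Finset.sum_map]
  · simp [he.extend_apply]
  · intro k _ hk
    refine extend_apply' _ _ _ fun ⟨i, hi⟩ => hk ?_
    simp [← hi]

section ConicCaratheodory

variable {𝕜 E : Type*} [Field 𝕜] [LinearOrder 𝕜] [IsStrictOrderedRing 𝕜]
  [AddCommGroup E] [Module 𝕜 E]

theorem exists_fin_sum_eq_of_mem_convexHull_of_smul_mem [FiniteDimensional 𝕜 E] {s : Set E}
    (hs : ∀ z ∈ s, ∀ c : 𝕜, 0 ≤ c → c • z ∈ s) {x : E} (hx : x ∈ convexHull 𝕜 s) :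
    ∃ z : Fin (Module.finrank 𝕜 E + 1) → E, (∀ i, z i ∈ s) ∧ ∑ i, z i = x := by
  obtain ⟨ι, _, y, w, hys, hyind, hw, -, rfl⟩ := eq_pos_convex_span_of_mem_convexHull hx
  have hcard : Fintype.card ι ≤ Fintype.card (Fin (Module.finrank 𝕜 E + 1)) := by
    simpa using hyind.card_le_finrank_succ.trans (by gcongr; exact Submodule.finrank_le _)
  obtain ⟨e⟩ := Function.Embedding.nonempty_of_card_le hcard
  have h0 : (0 : E) ∈ s := by
    obtain ⟨z, hz⟩ := convexHull_nonempty_iff.1 ⟨_, hx⟩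
    simpa using hs z hz 0 le_rfl
  refine ⟨extend e (fun i => w i • y i) 0, fun k => ?_, e.injective.sum_extend_zero _⟩
  by_cases hk : ∃ i, e i = k
  · obtain ⟨i, rfl⟩ := hk
    rw [e.injective.extend_apply]
    exact hs _ (hys ⟨i, rfl⟩) _ (hw i).le
  · rw [extend_apply' _ _ _ hk]
    exact h0

theorem sum_mem_convexHull_of_smul_mem {ι : Type*} [Fintype ι] [Nonempty ι] {s : Set E}
    (hs : ∀ z ∈ s, ∀ c : 𝕜, 0 ≤ c → c • z ∈ s) {z : ι → E} (hz : ∀ i, z i ∈ s) :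
    ∑ i, z i ∈ convexHull 𝕜 s := by
  have hN : (0 : 𝕜) < Fintype.card ι := by exact_mod_cast Fintype.card_pos
  have : ∑ i, z i = ∑ i, (Fintype.card ι : 𝕜)⁻¹ • ((Fintype.card ι : 𝕜) • z i) := by
    simp [smul_smul, hN.ne']
  rw [this]
  refine (convex_convexHull 𝕜 s).sum_mem (fun _ _ => by positivity) ?_
    fun i _ => subset_convexHull 𝕜 s (hs _ (hz i) _ hN.le)
  simp [hN.ne']

end ConicCaratheodory

section RankOneDecompositions

variable {ι κ : Type*} [Fintype ι] [Fintype κ]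

theorem Matrix.isClosed_setOf_posSemidef : IsClosed {M : Matrix κ κ ℝ | M.PosSemidef} := by
  simp only [posSemidef_iff_dotProduct_mulVec, ofPred_and, ofPred_forall]
  refine .inter (isClosed_eq continuous_id.matrix_conjTranspose continuous_id) ?_
  exact isClosed_iInter fun x => isClosed_le continuous_const
    (continuous_const.dotProduct (continuous_id.matrix_mulVec continuous_const))

theorem isClosed_JpFam {n : ℕ} (𝓑 : Set (Matrix (Fin n) (Fin n) ℝ)) : IsClosed (JpFam 𝓑) := by
  simp only [JpFam, ofPred_and, ofPred_forall]
  exact isClosed_setOf_posSemidef.inter <| isClosed_biInter fun B _ =>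
    isClosed_le continuous_const (continuous_const.matrix_mul continuous_id).matrix_trace

theorem isCompact_setOf_sum_vecMulVec_self_eq (X : Matrix κ κ ℝ) :
    IsCompact {x : ι → κ → ℝ | ∑ i, vecMulVec (x i) (x i) = X} := by
  have hclosed : IsClosed {x : ι → κ → ℝ | ∑ i, vecMulVec (x i) (x i) = X} :=
    isClosed_eq (continuous_finsetSum _ fun i _ =>
      (continuous_apply i).matrix_vecMulVec (continuous_apply i)) continuous_const
  refine (isCompact_univ_pi fun _ => isCompact_univ_pi fun _ =>
    isCompact_Icc (a := -√X.trace) (b := √X.trace)).of_isClosed_subset hclosed fun x hx => ?_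
  simp only [mem_univ_pi, mem_Icc, ← abs_le]
  intro i a
  refine Real.abs_le_sqrt ?_
  have htrace : X.trace = ∑ i, ∑ a, x i a ^ 2 := by
    rw [← show _ = X from hx, trace_sum]
    simp [trace_vecMulVec, dotProduct, sq]
  rw [htrace]
  exact (Finset.single_le_sum (fun a _ => sq_nonneg (x i a)) (Finset.mem_univ a)).trans
    (Finset.single_le_sum (f := fun i => ∑ a, x i a ^ 2)
      (fun i _ => Finset.sum_nonneg fun a _ => sq_nonneg _) (Finset.mem_univ i))

theorem exists_sum_vecMulVec_self_eq_forall_mem_of_antitone (X : Matrix κ κ ℝ)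
    {C : ℕ → Set (Matrix κ κ ℝ)} (hC : Antitone C) (hC_closed : ∀ m, IsClosed (C m))
    (h : ∀ m, ∃ x : ι → κ → ℝ, (∀ i, vecMulVec (x i) (x i) ∈ C m) ∧
      ∑ i, vecMulVec (x i) (x i) = X) :
    ∃ x : ι → κ → ℝ, (∀ i m, vecMulVec (x i) (x i) ∈ C m) ∧ ∑ i, vecMulVec (x i) (x i) = X := by
  let D : ℕ → Set (ι → κ → ℝ) := fun m =>
    {x | ∑ i, vecMulVec (x i) (x i) = X} ∩ ⋂ i, (fun x => vecMulVec (x i) (x i)) ⁻¹' C m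
  have hD_closed (m : ℕ) : IsClosed (D m) :=
    (isCompact_setOf_sum_vecMulVec_self_eq X).isClosed.inter <| isClosed_iInter fun i =>
      (hC_closed m).preimage <| (continuous_apply i).matrix_vecMulVec (continuous_apply i)
  obtain ⟨x, hx⟩ := IsCompact.nonempty_iInter_of_sequence_nonempty_isCompact_isClosed D
    (fun m => inter_subset_inter_right _ (iInter_mono fun i => preimage_mono (hC m.le_succ)))
    (fun m => by obtain ⟨x, hxC, hx⟩ := h m; exact ⟨x, hx, mem_iInter.2 hxC⟩)
    ((isCompact_setOf_sum_vecMulVec_self_eq X).of_isClosed_subset (hD_closed 0)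
      inter_subset_left) hD_closed
  simp only [D, mem_iInter, mem_inter_iff, mem_preimage] at hx
  exact ⟨x, fun i m => (hx m).2 i, (hx 0).1⟩

end RankOneDecompositions

section Gamma

variable {n : ℕ}

theorem smul_mem_Gamma {Z : Matrix (Fin n) (Fin n) ℝ} (hZ : Z ∈ Gamma n) {c : ℝ} (hc : 0 ≤ c) :
    c • Z ∈ Gamma n := by
  obtain ⟨x, rfl⟩ := hZ
  refine ⟨√c • x, ?_⟩
  rw [smul_vecMulVec, vecMulVec_smul, smul_smul, Real.mul_self_sqrt hc]

theorem smul_mem_JpFam {𝓑 : Set (Matrix (Fin n) (Fin n) ℝ)} {Z : Matrix (Fin n) (Fin n) ℝ}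
    (hZ : Z ∈ JpFam 𝓑) {c : ℝ} (hc : 0 ≤ c) : c • Z ∈ JpFam 𝓑 :=
  ⟨hZ.1.smul hc, fun B hB => by
    rw [Matrix.mul_smul, trace_smul]
    exact smul_nonneg hc (hZ.2 B hB)⟩

theorem mem_convexHull_Gamma_inter_iff {C : Set (Matrix (Fin n) (Fin n) ℝ)}
    (hC : ∀ Z ∈ C, ∀ c : ℝ, 0 ≤ c → c • Z ∈ C) {X : Matrix (Fin n) (Fin n) ℝ} :
    X ∈ convexHull ℝ (Gamma n ∩ C) ↔
      ∃ x : Fin (Module.finrank ℝ (Matrix (Fin n) (Fin n) ℝ) + 1) → Fin n → ℝ,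
        (∀ i, vecMulVec (x i) (x i) ∈ C) ∧ ∑ i, vecMulVec (x i) (x i) = X := by
  have hcone : ∀ Z ∈ Gamma n ∩ C, ∀ c : ℝ, 0 ≤ c → c • Z ∈ Gamma n ∩ C :=
    fun Z hZ c hc => ⟨smul_mem_Gamma hZ.1 hc, hC Z hZ.2 c hc⟩
  constructor
  · intro hX
    obtain ⟨Z, hZ, rfl⟩ := exists_fin_sum_eq_of_mem_convexHull_of_smul_mem hcone hX
    choose x hx using fun i => (hZ i).1
    refine ⟨x, fun i => hx i ▸ (hZ i).2, Finset.sum_congr rfl fun i _ => (hx i).symm⟩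
  · rintro ⟨x, hxC, rfl⟩
    exact sum_mem_convexHull_of_smul_mem hcone fun i => ⟨⟨x i, rfl⟩, hxC i⟩

end Gamma

theorem stmt2_general {n : ℕ} (Bs : ℕ → Set (Matrix (Fin n) (Fin n) ℝ))
    (J : Set (Matrix (Fin n) (Fin n) ℝ))
    (hinter : (⋂ k : ℕ, JpFam (Bs k)) = J) :
    (⋂ m : ℕ, convexHull ℝ (Gamma n ∩ ⋂ k ≤ m, JpFam (Bs k)))
      = convexHull ℝ (Gamma n ∩ J) := by
  subst hinter
  refine Subset.antisymm (fun X hX => ?_) <| subset_iInter fun m =>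
    convexHull_mono <| inter_subset_inter_right _ <| subset_iInter₂ fun k _ => iInter_subset _ k
  have hcone (K : Set ℕ) : ∀ Z ∈ ⋂ k ∈ K, JpFam (Bs k), ∀ c : ℝ, 0 ≤ c →
      c • Z ∈ ⋂ k ∈ K, JpFam (Bs k) := fun Z hZ c hc =>
    mem_iInter₂.2 fun k hk => smul_mem_JpFam (mem_iInter₂.1 hZ k hk) hc
  obtain ⟨x, hxC, hxX⟩ := exists_sum_vecMulVec_self_eq_forall_mem_of_antitone X
    (C := fun m => ⋂ k ≤ m, JpFam (Bs k))
    (fun m m' hm => biInter_mono (fun k hk => le_trans hk hm) fun _ _ => subset_rfl)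
    (fun m => isClosed_biInter fun k _ => isClosed_JpFam _)
    (fun m => (mem_convexHull_Gamma_inter_iff (hcone {k | k ≤ m})).1 (mem_iInter.1 hX m))
  simpa using (mem_convexHull_Gamma_inter_iff (hcone univ)).2
    ⟨x, fun i => mem_iInter₂.2 fun k _ => mem_iInter₂.1 (hxC i k) k le_rfl, hxX⟩

theorem stmt2 {n : ℕ} (Bs : ℕ → Set (Matrix (Fin n) (Fin n) ℝ))
    (J : Set (Matrix (Fin n) (Fin n) ℝ))
    (hJclosed : IsClosed J) (hJconv : Convex ℝ J)
    (hJcone : ∀ X ∈ J, ∀ c : ℝ, 0 ≤ c → c • X ∈ J)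
    (hJsub : J ⊆ PSDcone n)
    (hinter : (⋂ k : ℕ, JpFam (Bs k)) = J) :
    (⋂ m : ℕ, convexHull ℝ (Gamma n ∩ ⋂ k ≤ m, JpFam (Bs k)))
      = convexHull ℝ (Gamma n ∩ J) :=
  stmt2_general Bs J hinter
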